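/- arXiv:2502.08790 — 2 statements merged into one kernel-verified Lean document; each statement's English description precedes it below -/
import Mathlib

section
/- For each s > 0 and F(s) ∈ [0,1], the function φ_s(x) = exp(−(1−x)(s/(1−F(s)x) + 1)) on [0,1] satisfies φ_s(0) = e^{−(1+s)} > 0, φ_s(1) = 1, is strictly increasing and strictly convex on [0,1], and since φ_s'(0) < 1 and φ_s'(1) = 1 + s/(1−F(s)) > 1, it has exactly one fixed point x*(s) in the open interval (0,1). -/
/-!
`φ_s` is `exp` of a function whose derivative `s (1 - c) / (1 - c x)² + 1` is positive and
increasing on `[0, 1]`, so `φ_s' = (log φ_s)' · φ_s` is a product of positive increasing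
functions: `φ_s` is strictly increasing and strictly convex. A strictly convex function meets the
diagonal at most twice, and `φ_s(1) = 1` is one meeting point; since `φ_s(0) > 0` and
`φ_s'(1) > 1`, the graph crosses the diagonal once more inside `(0, 1)`.
-/

open Real Set Filter Topology

lemma HasDerivAt.eventually_lt_of_pos {g : ℝ → ℝ} {g' b : ℝ} (hg : HasDerivAt g g' b)
    (hg' : 0 < g') : ∀ᶠ y in 𝓝[<] b, g y < g b := by
  have hslope : ∀ᶠ y in 𝓝[<] b, 0 < slope g b y :=
    ((hasDerivAt_iff_tendsto_slope.1 hg).mono_left (nhdsWithin_mono b fun y hy => ne_of_lt hy))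
      |>.eventually (eventually_gt_nhds hg')
  filter_upwards [hslope, self_mem_nhdsWithin] with y hy hyb
  rw [slope_def_field] at hy
  have hyb' : y - b < 0 := sub_neg.2 hyb
  by_contra! h
  exact (div_nonpos_of_nonneg_of_nonpos (sub_nonneg.2 h) hyb'.le).not_gt hy

lemma exists_mem_Ioo_fixedPt_of_one_lt_deriv {f : ℝ → ℝ} {a b f' : ℝ} (hab : a < b)
    (hf : ContinuousOn f (Icc a b)) (ha : a < f a) (hb : f b = b) (hf' : HasDerivAt f f' b)
    (h1 : 1 < f') : ∃ x ∈ Ioo a b, f x = x := by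
  obtain ⟨y, hy_below, hy⟩ : ∃ y, f y - y < f b - b ∧ y ∈ Ioo a b :=
    (((hf'.sub (hasDerivAt_id b)).eventually_lt_of_pos (sub_pos.2 h1)).and
      (Ioo_mem_nhdsLT hab)).exists
  have hcont : ContinuousOn (fun x => f x - x) (Icc a y) :=
    (hf.mono (Icc_subset_Icc_right hy.2.le)).sub continuousOn_id
  have hzero : (0 : ℝ) ∈ Ioo (f y - y) (f a - a) := by
    constructor <;> simp only [hb, sub_self, sub_pos] at hy_below ⊢ <;> linarith
  obtain ⟨x, hx, hfx⟩ := intermediate_value_Ioo' hy.1.le hcont hzero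
  exact ⟨x, ⟨hx.1, hx.2.trans hy.2⟩, sub_eq_zero.1 hfx⟩

lemma StrictConvexOn.apply_lt_of_fixedPt {f : ℝ → ℝ} {s : Set ℝ} {x y z : ℝ}
    (hf : StrictConvexOn ℝ s f) (hx : x ∈ s) (hz : z ∈ s) (hxy : x < y) (hyz : y < z)
    (hfx : f x = x) (hfz : f z = z) : f y < y := by
  have hslope := hf.slope_strict_mono_adjacent hx hz hxy hyz
  rw [hfx, hfz, div_lt_div_iff₀ (sub_pos.2 hxy) (sub_pos.2 hyz)] at hslope
  nlinarith

lemma StrictConvexOn.existsUnique_mem_Ioo_fixedPt {f : ℝ → ℝ} {a b f' : ℝ} (hab : a < b)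
    (hf : StrictConvexOn ℝ (Icc a b) f) (hfc : ContinuousOn f (Icc a b)) (ha : a < f a)
    (hb : f b = b) (hf' : HasDerivAt f f' b) (h1 : 1 < f') :
    ∃! x, x ∈ Ioo a b ∧ f x = x := by
  obtain ⟨x, hx, hfx⟩ := exists_mem_Ioo_fixedPt_of_one_lt_deriv hab hfc ha hb hf' h1
  have hbI : b ∈ Icc a b := right_mem_Icc.2 hab.le
  refine ⟨x, ⟨hx, hfx⟩, fun y ⟨hy, hfy⟩ => ?_⟩
  rcases lt_trichotomy y x with hyx | rfl | hxy
  · exact absurd hfx (hf.apply_lt_of_fixedPt (Ioo_subset_Icc_self hy) hbI hyx hx.2 hfy hb).ne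
  · rfl
  · exact absurd hfy (hf.apply_lt_of_fixedPt (Ioo_subset_Icc_self hx) hbI hxy hy.2 hfx hb).ne

namespace UniformSpanningTree

/-- The map `φ_s`, with `c` standing for `F(s)`. -/
noncomputable def phi (s c x : ℝ) : ℝ := exp (-(1 - x) * (s / (1 - c * x) + 1))

noncomputable def logDerivPhi (s c x : ℝ) : ℝ := s * (1 - c) / (1 - c * x) ^ 2 + 1

variable {s c x : ℝ}

lemma phi_pos : 0 < phi s c x := exp_pos _

lemma phi_zero : phi s c 0 = exp (-(1 + s)) := by
  simp only [phi, sub_zero, mul_zero, div_one, neg_mul, one_mul, add_comm]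

lemma phi_one : phi s c 1 = 1 := by
  simp [phi]

lemma hasDerivAt_phi (hx : 1 - c * x ≠ 0) :
    HasDerivAt (phi s c) (logDerivPhi s c x * phi s c x) x := by
  have hden : HasDerivAt (fun x : ℝ => 1 - c * x) (-c) x := by
    simpa using ((hasDerivAt_id x).const_mul c).const_sub 1
  have hexponent :
      HasDerivAt (fun x => -(1 - x) * (s / (1 - c * x) + 1)) (logDerivPhi s c x) x :=
    (((hasDerivAt_id x).const_sub 1).neg.mul (((hasDerivAt_const x s).div hden hx).add_const 1))
      |>.congr_deriv (by simp only [logDerivPhi, Pi.div_apply, Pi.neg_apply, id]; field_simp; ring)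
  exact hexponent.exp.congr_deriv (mul_comm _ _)

lemma one_sub_mul_pos (hc : c < 1) (hx : x ∈ Icc 0 1) : 0 < 1 - c * x := by
  rcases le_total 0 c with h | h <;> nlinarith [hx.1, hx.2]

lemma deriv_phi (hc : c < 1) (hx : x ∈ Icc 0 1) :
    deriv (phi s c) x = logDerivPhi s c x * phi s c x :=
  (hasDerivAt_phi (one_sub_mul_pos hc hx).ne').deriv

lemma continuousOn_phi (hc : c < 1) : ContinuousOn (phi s c) (Icc 0 1) := fun _ hx =>
  (hasDerivAt_phi (one_sub_mul_pos hc hx).ne').continuousAt.continuousWithinAt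

lemma logDerivPhi_pos (hs : 0 ≤ s) (hc : c < 1) : 0 < logDerivPhi s c x := by
  unfold logDerivPhi
  have : 0 ≤ s * (1 - c) / (1 - c * x) ^ 2 :=
    div_nonneg (mul_nonneg hs (by linarith)) (sq_nonneg _)
  linarith

lemma logDerivPhi_monotoneOn (hs : 0 ≤ s) (hc0 : 0 ≤ c) (hc1 : c < 1) :
    MonotoneOn (logDerivPhi s c) (Icc 0 1) := by
  intro x _ y hy hxy
  have hy_pos := one_sub_mul_pos hc1 hy
  have hsq : (1 - c * y) ^ 2 ≤ (1 - c * x) ^ 2 := by nlinarith [mul_le_mul_of_nonneg_left hxy hc0]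
  unfold logDerivPhi
  gcongr

lemma strictMonoOn_phi (hs : 0 ≤ s) (hc : c < 1) : StrictMonoOn (phi s c) (Icc 0 1) :=
  strictMonoOn_of_deriv_pos (convex_Icc 0 1) (continuousOn_phi hc) fun x hx => by
    rw [interior_Icc] at hx
    rw [deriv_phi hc (Ioo_subset_Icc_self hx)]
    exact mul_pos (logDerivPhi_pos hs hc) phi_pos

lemma strictConvexOn_phi (hs : 0 ≤ s) (hc0 : 0 ≤ c) (hc1 : c < 1) :
    StrictConvexOn ℝ (Icc 0 1) (phi s c) := by
  refine StrictMonoOn.strictConvexOn_of_deriv (convex_Icc 0 1) (continuousOn_phi hc1) ?_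
  rw [interior_Icc]
  intro x hx y hy hxy
  have hx' := Ioo_subset_Icc_self hx
  have hy' := Ioo_subset_Icc_self hy
  rw [deriv_phi hc1 hx', deriv_phi hc1 hy']
  calc logDerivPhi s c x * phi s c x < logDerivPhi s c x * phi s c y :=
        mul_lt_mul_of_pos_left (strictMonoOn_phi hs hc1 hx' hy' hxy) (logDerivPhi_pos hs hc1)
    _ ≤ logDerivPhi s c y * phi s c y :=
        mul_le_mul_of_nonneg_right (logDerivPhi_monotoneOn hs hc0 hc1 hx' hy' hxy.le) phi_pos.le

lemma deriv_phi_zero_lt_one (hs : 0 < s) (hc0 : 0 ≤ c) (hc1 : c < 1) :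
    deriv (phi s c) 0 < 1 := by
  rw [deriv_phi hc1 (left_mem_Icc.2 zero_le_one), phi_zero, exp_neg,
    mul_inv_lt_iff₀ (exp_pos _), one_mul]
  calc logDerivPhi s c 0 = s * (1 - c) + 1 := by simp [logDerivPhi]
    _ ≤ 1 + s := by nlinarith
    _ < exp (1 + s) := by linarith [add_one_lt_exp (x := 1 + s) (by positivity)]

lemma deriv_phi_one (hc : c < 1) : deriv (phi s c) 1 = 1 + s / (1 - c) := by
  rw [deriv_phi hc (right_mem_Icc.2 zero_le_one), phi_one, logDerivPhi]
  have : 1 - c ≠ 0 := by linarith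
  field_simp
  ring

lemma one_lt_deriv_phi_one (hs : 0 < s) (hc : c < 1) : 1 < deriv (phi s c) 1 := by
  rw [deriv_phi_one hc]
  have : 0 < s / (1 - c) := div_pos hs (by linarith)
  linarith

end UniformSpanningTree

open UniformSpanningTree in
/-- For `s > 0` and `c = F(s) ∈ [0,1)`, the function
`φ_s(x) = exp(−(1−x)(s/(1−cx) + 1))` satisfies `φ_s(0) = e^{−(1+s)} > 0`, `φ_s(1) = 1`,
is strictly increasing and strictly convex on `[0,1]`, has `φ_s'(0) < 1` and
`φ_s'(1) = 1 + s/(1−c) > 1`, and has exactly one fixed point in `(0,1)`. -/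
theorem uniform_spanning_tree_fixed_point_unique
    (s c : ℝ) (hs : 0 < s) (hc0 : 0 ≤ c) (hc1 : c < 1) :
    let φ : ℝ → ℝ := fun x => Real.exp (-(1 - x) * (s / (1 - c * x) + 1))
    φ 0 = Real.exp (-(1 + s)) ∧ 0 < φ 0 ∧ φ 1 = 1 ∧
    StrictMonoOn φ (Set.Icc 0 1) ∧ StrictConvexOn ℝ (Set.Icc 0 1) φ ∧
    deriv φ 0 < 1 ∧ deriv φ 1 = 1 + s / (1 - c) ∧ 1 < deriv φ 1 ∧
    ∃! x, x ∈ Set.Ioo (0 : ℝ) 1 ∧ φ x = x := by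
  have hconvex := strictConvexOn_phi hs.le hc0 hc1
  have hderiv_one : HasDerivAt (phi s c) (deriv (phi s c) 1) 1 :=
    (hasDerivAt_phi (one_sub_mul_pos hc1 (right_mem_Icc.2 zero_le_one)).ne').differentiableAt
      |>.hasDerivAt
  exact ⟨phi_zero, phi_pos, phi_one, strictMonoOn_phi hs.le hc1, hconvex,
    deriv_phi_zero_lt_one hs hc0 hc1, deriv_phi_one hc1, one_lt_deriv_phi_one hs hc1,
    hconvex.existsUnique_mem_Ioo_fixedPt zero_lt_one (continuousOn_phi hc1) phi_pos phi_one
      hderiv_one (one_lt_deriv_phi_one hs hc1)⟩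
end

section
/- In a finite connected graph with distinct edge weights, an edge e = (u,v) belongs to the (unique) minimum spanning tree if and only if, after removing from the graph all edges whose weight is at least the weight of e, the vertices u and v lie in different connected components. -/
/-! Both directions are edge exchanges. If `ab` is an edge of a spanning tree `T` and `xy` joins
the two components of `T - ab`, then `T - ab + xy` is again a spanning tree, of weight
`w(T) - ℓ(ab) + ℓ(xy)`; so for a minimum spanning tree `ℓ(ab) ≤ ℓ(xy)` for every such pair.
If `uv ∈ T`, a `u`-`v` path of edges lighter than `uv` would cross the cut of `T - uv` along an
edge lighter than `uv`. If `uv ∉ T`, the tree path from `u` to `v` leaves the component of `u`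
in the light subgraph along a tree edge `ab` with `ℓ(uv) ≤ ℓ(ab)`, the exchange gives the
reverse inequality, and injectivity of `ℓ` forces `ab = uv`. -/

/-- Total weight of the edges of a subgraph `T`, for edge weights `ℓ`. -/
noncomputable def subgraphWeight {V : Type*} [Fintype V]
    (T : SimpleGraph V) (ℓ : Sym2 V → ℝ) : ℝ :=
  ∑ e : Sym2 V, Set.indicator T.edgeSet ℓ e

namespace SimpleGraph

variable {V : Type*} {G H T : SimpleGraph V}

lemma Walk.exists_dart_not_reachable {u v : V} (p : G.Walk u v) (h : ¬H.Reachable u v) :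
    ∃ d ∈ p.darts, ¬H.Reachable d.fst d.snd := by
  obtain ⟨d, hd, hu, hv⟩ := p.exists_boundary_dart {w | H.Reachable u w} Reachable.rfl h
  exact ⟨d, hd, fun h' => hv (hu.trans h')⟩

lemma IsAcyclic.not_reachable_deleteEdges_of_mem_edges (hT : T.IsAcyclic) {u v a b : V}
    {p : T.Walk u v} (hp : p.IsPath) (hab : s(a, b) ∈ p.edges) :
    ¬(T.deleteEdges {s(a, b)}).Reachable u v := by
  classical
  rw [reachable_deleteEdges_iff_exists_walk]
  rintro ⟨q, hq⟩
  have hpq : p = q.bypass :=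
    congrArg Subtype.val ((hT.subsingleton_path u v).elim ⟨p, hp⟩ q.toPath)
  subst hpq
  exact hq (q.edges_bypass_subset_edges hab)

lemma Preconnected.reachable_or_reachable_deleteEdges (hG : G.Preconnected) (a b z : V) :
    (G.deleteEdges {s(a, b)}).Reachable z a ∨ (G.deleteEdges {s(a, b)}).Reachable z b := by
  set H := G.deleteEdges {s(a, b)}
  by_contra hz
  obtain ⟨p⟩ := hG a z
  obtain ⟨d, -, hfst, hsnd⟩ :=
    p.exists_boundary_dart {w | H.Reachable w a ∨ H.Reachable w b} (Or.inl .rfl) hz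
  by_cases he : s(d.fst, d.snd) = s(a, b)
  · rcases Sym2.eq_iff.mp he with ⟨-, hb⟩ | ⟨-, ha⟩
    · exact hsnd (Or.inr (hb ▸ .rfl))
    · exact hsnd (Or.inl (ha ▸ .rfl))
  · have hd : H.Adj d.snd d.fst :=
      (deleteEdges_adj ..).mpr ⟨d.adj.symm, by simpa [Sym2.eq_swap] using he⟩
    exact hsnd (hfst.imp hd.reachable.trans hd.reachable.trans)

lemma Connected.deleteEdges_sup_edge (hG : G.Connected) {a b x y : V}
    (hxy : ¬(G.deleteEdges {s(a, b)}).Reachable x y) :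
    (G.deleteEdges {s(a, b)} ⊔ edge x y).Connected := by
  set H := G.deleteEdges {s(a, b)}
  have hle : H ≤ H ⊔ edge x y := le_sup_left
  have hside := hG.preconnected.reachable_or_reachable_deleteEdges a b
  have hne : x ≠ y := by rintro rfl; exact hxy .rfl
  have hxy' : (H ⊔ edge x y).Reachable x y :=
    ((sup_adj ..).mpr (Or.inr ((edge_adj ..).mpr ⟨Or.inl ⟨rfl, rfl⟩, hne⟩))).reachable
  have hab : (H ⊔ edge x y).Reachable a b := by
    rcases hside x with hx | hx <;> rcases hside y with hy | hy
    · exact absurd (hx.trans hy.symm) hxy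
    · exact (hx.mono hle).symm.trans (hxy'.trans (hy.mono hle))
    · exact (hy.mono hle).symm.trans (hxy'.symm.trans (hx.mono hle))
    · exact absurd (hx.trans hy.symm) hxy
  refine (connected_iff_exists_forall_reachable _).mpr ⟨a, fun z => ?_⟩
  rcases hside z with hz | hz
  · exact (hz.mono hle).symm
  · exact hab.trans (hz.mono hle).symm

lemma IsTree.deleteEdges_sup_edge (hT : T.IsTree) {a b x y : V}
    (hxy : ¬(T.deleteEdges {s(a, b)}).Reachable x y) :
    (T.deleteEdges {s(a, b)} ⊔ edge x y).IsTree :=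
  ⟨hT.connected.deleteEdges_sup_edge hxy,
    (hT.isAcyclic.anti (deleteEdges_le _)).sup_edge_of_not_reachable hxy⟩

end SimpleGraph

open SimpleGraph

lemma subgraphWeight_of_edgeSet_eq_insert {V : Type*} [Fintype V] {H H' : SimpleGraph V}
    (ℓ : Sym2 V → ℝ) {f : Sym2 V} (hf : f ∉ H.edgeSet) (h : H'.edgeSet = insert f H.edgeSet) :
    subgraphWeight H' ℓ = subgraphWeight H ℓ + ℓ f := by
  rw [subgraphWeight, subgraphWeight, h, Set.insert_eq,
    Set.indicator_union_of_disjoint (Set.disjoint_singleton_left.mpr hf), Finset.sum_add_distrib,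
    add_comm]
  classical
  simp [Set.indicator_apply]

section MinSpanningTree

variable {V : Type*} [Fintype V]

structure IsMinSpanningTree (G : SimpleGraph V) (ℓ : Sym2 V → ℝ) (T : SimpleGraph V) : Prop where
  le : T ≤ G
  isTree : T.IsTree
  weight_le : ∀ T' : SimpleGraph V, T' ≤ G → T'.IsTree → subgraphWeight T ℓ ≤ subgraphWeight T' ℓ

namespace IsMinSpanningTree

variable {G T : SimpleGraph V} {ℓ : Sym2 V → ℝ}

lemma weight_le_of_not_reachable (hM : IsMinSpanningTree G ℓ T) {a b x y : V} (hab : T.Adj a b)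
    (hxy : G.Adj x y) (hsep : ¬(T.deleteEdges {s(a, b)}).Reachable x y) :
    ℓ s(a, b) ≤ ℓ s(x, y) := by
  set H := T.deleteEdges {s(a, b)}
  have habH : s(a, b) ∉ H.edgeSet := by simp [H]
  have hxyH : s(x, y) ∉ H.edgeSet := fun h => hsep ((mem_edgeSet _).mp h).reachable
  have hT : subgraphWeight T ℓ = subgraphWeight H ℓ + ℓ s(a, b) :=
    subgraphWeight_of_edgeSet_eq_insert ℓ habH <| by
      rw [edgeSet_deleteEdges, Set.insert_sdiff_singleton,
        Set.insert_eq_of_mem ((mem_edgeSet _).mpr hab)]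
  have hT' : subgraphWeight (H ⊔ edge x y) ℓ = subgraphWeight H ℓ + ℓ s(x, y) :=
    subgraphWeight_of_edgeSet_eq_insert ℓ hxyH <| by
      rw [edgeSet_sup, edgeSet_edge_of_ne hxy.ne, Set.union_singleton]
  have hle : H ⊔ edge x y ≤ G :=
    sup_le ((deleteEdges_le _).trans hM.le) ((edge_le_iff G).mpr (.inr hxy))
  have hmin := hM.weight_le _ hle (hM.isTree.deleteEdges_sup_edge hsep)
  linarith

lemma not_reachable_of_adj (hM : IsMinSpanningTree G ℓ T) {u v : V} (huv : T.Adj u v) :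
    ¬(G.deleteEdges {e | ℓ s(u, v) ≤ ℓ e}).Reachable u v := by
  rintro ⟨p⟩
  have hbridge : ¬(T.deleteEdges {s(u, v)}).Reachable u v :=
    isAcyclic_iff_forall_adj_isBridge.mp hM.isTree.isAcyclic huv
  obtain ⟨d, -, hd⟩ := p.exists_dart_not_reachable hbridge
  obtain ⟨hdG, hlight⟩ := (deleteEdges_adj ..).mp d.adj
  exact hlight (hM.weight_le_of_not_reachable huv hdG hd)

lemma adj_of_not_reachable (hM : IsMinSpanningTree G ℓ T) (hℓ : Set.InjOn ℓ G.edgeSet)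
    {u v : V} (huv : G.Adj u v) (h : ¬(G.deleteEdges {e | ℓ s(u, v) ≤ ℓ e}).Reachable u v) :
    T.Adj u v := by
  obtain ⟨p, hp⟩ := hM.isTree.connected.exists_isPath u v
  obtain ⟨d, hdp, hd⟩ := p.exists_dart_not_reachable h
  have hheavy : ℓ s(u, v) ≤ ℓ s(d.fst, d.snd) := by
    by_contra hlight
    exact hd ((deleteEdges_adj ..).mpr ⟨hM.le d.adj, hlight⟩).reachable
  have hsep := hM.isTree.isAcyclic.not_reachable_deleteEdges_of_mem_edges hp
    (List.mem_map_of_mem hdp : d.edge ∈ p.edges)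
  have he : s(d.fst, d.snd) = s(u, v) :=
    hℓ (hM.le d.adj) huv (le_antisymm (hM.weight_le_of_not_reachable d.adj huv hsep) hheavy)
  exact (mem_edgeSet _).mp (he ▸ d.adj)

end IsMinSpanningTree

end MinSpanningTree

theorem mst_cut_characterization_general {V : Type*} [Fintype V]
    (G : SimpleGraph V)
    (ℓ : Sym2 V → ℝ) (hℓ : Set.InjOn ℓ G.edgeSet)
    (T : SimpleGraph V) (hTG : T ≤ G) (hT : T.IsTree)
    (hmin : ∀ T' : SimpleGraph V, T' ≤ G → T'.IsTree →
      subgraphWeight T ℓ ≤ subgraphWeight T' ℓ)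
    (u v : V) (huv : G.Adj u v) :
    T.Adj u v ↔
      ¬ (G.deleteEdges {e | ℓ s(u, v) ≤ ℓ e}).Reachable u v :=
  have hM : IsMinSpanningTree G ℓ T := ⟨hTG, hT, hmin⟩
  ⟨hM.not_reachable_of_adj, hM.adj_of_not_reachable hℓ huv⟩

/-- In a finite connected graph with distinct edge weights, an edge `e = (u,v)` belongs
to the minimum spanning tree iff, after removing all edges of weight at least `ℓ(e)`,
the vertices `u` and `v` lie in different connected components. -/
theorem mst_cut_characterization {V : Type*} [Fintype V] [DecidableEq V]
    (G : SimpleGraph V) (hG : G.Connected)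
    (ℓ : Sym2 V → ℝ) (hℓ : Set.InjOn ℓ G.edgeSet)
    (T : SimpleGraph V) (hTG : T ≤ G) (hT : T.IsTree)
    (hmin : ∀ T' : SimpleGraph V, T' ≤ G → T'.IsTree →
      subgraphWeight T ℓ ≤ subgraphWeight T' ℓ)
    (u v : V) (huv : G.Adj u v) :
    T.Adj u v ↔
      ¬ (G.deleteEdges {e | ℓ s(u, v) ≤ ℓ e}).Reachable u v :=
  mst_cut_characterization_general G ℓ hℓ T hTG hT hmin u v huv
end
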